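/- arXiv:math/0503550 — 2 statements merged into one kernel-verified Lean document; each statement's English description precedes it below -/
import Mathlib

section
/- In the one-period model on Ω = (0,1]: (i) every separating measure Q (i.e., probability Q ≪ P with density satisfying q₁(n) = n·q₂(n) for all n) whose density dQ/dP is square-integrable with respect to P satisfies X₁ ∈ L¹(Q) and E_Q[X₁] = 0; (ii) for every x ∈ ℝ there is no admissible strategy α with x + α·X₁ ≥ X₁ P-a.s., i.e. the super replication price of X₁ is +∞. -/
/-!
For (i): on `I_n` a density with `q₁ n = n q₂ n` makes `dQ/dP · X₁` equal to `n² q₂ n` on `J_n^1` and to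
`-n² q₂ n` on `J_n^2`, two halves of equal length, so its integral over every `I_n` vanishes.
Summing over `n` is legitimate because `dQ/dP · X₁ ∈ L¹(P)` by Cauchy–Schwarz: the density is
in `L²(P)` by assumption and so is `X₁`, since `∑ n⁴ 2⁻ⁿ < ∞`.

For (ii), let `α` be admissible with bound `c`, equal to `a_N` on `I_N` with `N > x + c`.
Super-replication on `J_N^1` forces `a_N N ≥ N - x > c`, while admissibility on `J_N^2` forces
`a_N N² ≤ c`; both cannot hold for `N ≥ 1`.
-/

open MeasureTheory

/-- `P`: Lebesgue measure restricted to `Ω = (0,1]`. -/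
noncomputable def Pmeas : Measure ℝ := MeasureTheory.volume.restrict (Set.Ioc 0 1)

/-- `I_n = (2^{-n}, 2^{-(n-1)}]` (intended for `n ≥ 1`). -/
def Iset (n : ℕ) : Set ℝ := Set.Ioc ((2 : ℝ) ^ n)⁻¹ ((2 : ℝ) ^ (n - 1))⁻¹

/-- `J_n^1 = (2^{-n}, 3·2^{-(n+1)}]`. -/
def J1 (n : ℕ) : Set ℝ := Set.Ioc ((2 : ℝ) ^ n)⁻¹ (3 * ((2 : ℝ) ^ (n + 1))⁻¹)

/-- `J_n^2 = (3·2^{-(n+1)}, 2^{-(n-1)}]`. -/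
def J2 (n : ℕ) : Set ℝ := Set.Ioc (3 * ((2 : ℝ) ^ (n + 1))⁻¹) ((2 : ℝ) ^ (n - 1))⁻¹

/-- A strategy: a function constant, equal to some `a n`, on each `I_n`. -/
def IsStrategy (α : ℝ → ℝ) : Prop :=
  ∃ a : ℕ → ℝ, ∀ n : ℕ, 1 ≤ n → ∀ ω ∈ Iset n, α ω = a n

/-- An admissible strategy: a strategy whose gain `α·X₁` is bounded below by a constant
`-c`, `P`-a.s. -/
def IsAdmissible (X₁ α : ℝ → ℝ) : Prop :=
  IsStrategy α ∧ ∃ c : ℝ, 0 ≤ c ∧ ∀ᵐ ω ∂Pmeas, -c ≤ α ω * X₁ ω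

open Set Function

lemma Iset_succ (m : ℕ) : Iset (m + 1) = Ioc ((2 : ℝ) ^ (m + 1))⁻¹ ((2 : ℝ) ^ m)⁻¹ := by
  simp [Iset]

lemma pairwise_disjoint_Iset_succ : Pairwise (Disjoint on fun m : ℕ => Iset (m + 1)) := by
  have hanti : Antitone fun m : ℕ => ((2 : ℝ) ^ m)⁻¹ := fun i j hij =>
    inv_anti₀ (by positivity) (pow_le_pow_right₀ one_le_two hij)
  simpa only [Iset_succ, Order.succ_eq_add_one] using hanti.pairwise_disjoint_on_Ioc_succ

lemma iUnion_Iset_succ : ⋃ m : ℕ, Iset (m + 1) = Ioc 0 1 := by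
  refine Subset.antisymm (iUnion_subset fun m => ?_) fun ω hω => ?_
  · rw [Iset_succ]
    exact Ioc_subset_Ioc (by positivity) (inv_le_one_of_one_le₀ (one_le_pow₀ one_le_two))
  · obtain ⟨m, hle, hlt⟩ := exists_nat_pow_near (one_le_inv₀ hω.1 |>.2 hω.2) one_lt_two
    refine mem_iUnion.2 ⟨m, ?_⟩
    rw [Iset_succ]
    exact ⟨inv_lt_of_inv_lt₀ hω.1 hlt, le_inv_of_le_inv₀ (by positivity) hle⟩

lemma Iset_subset_Ioc {n : ℕ} (hn : 1 ≤ n) : Iset n ⊆ Ioc 0 1 := by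
  obtain ⟨m, rfl⟩ := Nat.exists_eq_add_of_le' hn
  exact iUnion_Iset_succ ▸ subset_iUnion (fun m : ℕ => Iset (m + 1)) m

lemma inv_two_pow_succ (n : ℕ) : ((2 : ℝ) ^ (n + 1))⁻¹ = ((2 : ℝ) ^ n)⁻¹ / 2 := by
  rw [pow_succ, mul_inv, div_eq_mul_inv]

lemma J1_union_J2 {n : ℕ} (hn : 1 ≤ n) : J1 n ∪ J2 n = Iset n := by
  obtain ⟨m, rfl⟩ := Nat.exists_eq_add_of_le' hn
  have h : (0 : ℝ) < ((2 : ℝ) ^ m)⁻¹ := by positivity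
  simp only [J1, J2, Iset, Nat.add_sub_cancel, inv_two_pow_succ]
  exact Ioc_union_Ioc_eq_Ioc (by linarith) (by linarith)

lemma J1_subset_Iset {n : ℕ} (hn : 1 ≤ n) : J1 n ⊆ Iset n :=
  J1_union_J2 hn ▸ subset_union_left

lemma J2_subset_Iset {n : ℕ} (hn : 1 ≤ n) : J2 n ⊆ Iset n :=
  J1_union_J2 hn ▸ subset_union_right

lemma measurableSet_Iset (n : ℕ) : MeasurableSet (Iset n) := measurableSet_Ioc

lemma measurableSet_J1 (n : ℕ) : MeasurableSet (J1 n) := measurableSet_Ioc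

lemma measurableSet_J2 (n : ℕ) : MeasurableSet (J2 n) := measurableSet_Ioc

lemma disjoint_J1_J2 (n : ℕ) : Disjoint (J1 n) (J2 n) := Ioc_disjoint_Ioc_of_le le_rfl

lemma volume_J1 (n : ℕ) : volume (J1 n) = ENNReal.ofReal ((2 : ℝ) ^ (n + 1))⁻¹ := by
  rw [J1, Real.volume_Ioc, inv_two_pow_succ]
  ring_nf

lemma volume_J2 {n : ℕ} (hn : 1 ≤ n) : volume (J2 n) = ENNReal.ofReal ((2 : ℝ) ^ (n + 1))⁻¹ := by
  obtain ⟨m, rfl⟩ := Nat.exists_eq_add_of_le' hn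
  rw [J2, Real.volume_Ioc, Nat.add_sub_cancel, inv_two_pow_succ, inv_two_pow_succ]
  ring_nf

lemma exists_mem_of_ae_Pmeas {p : ℝ → Prop} (h : ∀ᵐ ω ∂Pmeas, p ω) {s : Set ℝ}
    (hs : MeasurableSet s) (hsub : s ⊆ Ioc 0 1) (hs0 : volume s ≠ 0) : ∃ ω ∈ s, p ω :=
  Measure.exists_mem_of_measure_ne_zero_of_ae
    (by rwa [Pmeas, Measure.restrict_apply hs, inter_eq_left.2 hsub]) (ae_restrict_of_ae h)

lemma Pmeas_eq_restrict_iUnion : Pmeas = volume.restrict (⋃ m : ℕ, Iset (m + 1)) := by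
  rw [Pmeas, iUnion_Iset_succ]

/-- The `𝓕₁`-measurable functions on `Ω`, recorded by their values on the atoms `J_n^i`. -/
def IsConstOnAtoms (f : ℝ → ℝ) (u v : ℕ → ℝ) : Prop :=
  ∀ n : ℕ, 1 ≤ n → (∀ ω ∈ J1 n, f ω = u n) ∧ (∀ ω ∈ J2 n, f ω = v n)

namespace IsConstOnAtoms

variable {f g : ℝ → ℝ} {u v u' v' : ℕ → ℝ}

lemma mul (hf : IsConstOnAtoms f u v) (hg : IsConstOnAtoms g u' v') :
    IsConstOnAtoms (f * g) (u * u') (v * v') := fun n hn =>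
  ⟨fun ω hω => by simp [(hf n hn).1 ω hω, (hg n hn).1 ω hω],
    fun ω hω => by simp [(hf n hn).2 ω hω, (hg n hn).2 ω hω]⟩

lemma abs (hf : IsConstOnAtoms f u v) :
    IsConstOnAtoms (fun ω => |f ω|) (fun n => |u n|) (fun n => |v n|) := fun n hn =>
  ⟨fun ω hω => by dsimp only; rw [(hf n hn).1 ω hω],
    fun ω hω => by dsimp only; rw [(hf n hn).2 ω hω]⟩

lemma posPart (hf : IsConstOnAtoms f u v) (hu : ∀ n, 0 ≤ u n) (hv : ∀ n, 0 ≤ v n) :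
    IsConstOnAtoms (fun ω => max (f ω) 0) u v := fun n hn =>
  ⟨fun ω hω => by dsimp only; rw [(hf n hn).1 ω hω, max_eq_left (hu n)],
    fun ω hω => by dsimp only; rw [(hf n hn).2 ω hω, max_eq_left (hv n)]⟩

lemma aestronglyMeasurable (hf : IsConstOnAtoms f u v) : AEStronglyMeasurable f Pmeas := by
  rw [Pmeas_eq_restrict_iUnion, aestronglyMeasurable_iUnion_iff]
  intro m
  have hm : 1 ≤ m + 1 := Nat.le_add_left 1 m
  rw [← J1_union_J2 hm, aestronglyMeasurable_union_iff]
  exact ⟨aestronglyMeasurable_const.congr <| ae_restrict_of_forall_mem (measurableSet_J1 _)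
      fun ω hω => ((hf _ hm).1 ω hω).symm,
    aestronglyMeasurable_const.congr <| ae_restrict_of_forall_mem (measurableSet_J2 _)
      fun ω hω => ((hf _ hm).2 ω hω).symm⟩

lemma integrableOn_Iset (hf : IsConstOnAtoms f u v) {n : ℕ} (hn : 1 ≤ n) :
    IntegrableOn f (Iset n) := by
  rw [← J1_union_J2 hn, integrableOn_union]
  exact ⟨(integrableOn_const (by simp [volume_J1])).congr_fun
      (fun ω hω => ((hf n hn).1 ω hω).symm) (measurableSet_J1 n),
    (integrableOn_const (by simp [volume_J2 hn])).congr_fun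
      (fun ω hω => ((hf n hn).2 ω hω).symm) (measurableSet_J2 n)⟩

lemma setIntegral_Iset (hf : IsConstOnAtoms f u v) {n : ℕ} (hn : 1 ≤ n) :
    ∫ ω in Iset n, f ω = (u n + v n) * ((2 : ℝ) ^ (n + 1))⁻¹ := by
  have hI := hf.integrableOn_Iset hn
  rw [← J1_union_J2 hn] at hI ⊢
  rw [setIntegral_union (disjoint_J1_J2 n) (measurableSet_J2 n) hI.left_of_union hI.right_of_union,
    setIntegral_congr_fun (measurableSet_J1 n) (hf n hn).1,
    setIntegral_congr_fun (measurableSet_J2 n) (hf n hn).2, setIntegral_const, setIntegral_const,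
    measureReal_def, measureReal_def, volume_J1, volume_J2 hn,
    ENNReal.toReal_ofReal (by positivity)]
  simp only [smul_eq_mul]
  ring

lemma integrable_of_summable (hf : IsConstOnAtoms f u v)
    (hs : Summable fun m : ℕ => (|u (m + 1)| + |v (m + 1)|) * ((2 : ℝ) ^ (m + 2))⁻¹) :
    Integrable f Pmeas := by
  rw [Pmeas_eq_restrict_iUnion]
  refine integrableOn_iUnion_of_summable_integral_norm
    (fun m => hf.integrableOn_Iset (Nat.le_add_left 1 m)) ?_
  simpa only [Real.norm_eq_abs, hf.abs.setIntegral_Iset (Nat.le_add_left 1 _)] using hs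

lemma integral_eq_tsum (hf : IsConstOnAtoms f u v) (hint : Integrable f Pmeas) :
    ∫ ω, f ω ∂Pmeas = ∑' m : ℕ, (u (m + 1) + v (m + 1)) * ((2 : ℝ) ^ (m + 2))⁻¹ := by
  rw [Pmeas_eq_restrict_iUnion] at hint ⊢
  rw [integral_iUnion (fun m => measurableSet_Iset (m + 1)) pairwise_disjoint_Iset_succ hint]
  exact tsum_congr fun m => hf.setIntegral_Iset (Nat.le_add_left 1 m)

lemma memLp_two (hf : IsConstOnAtoms f u v)
    (hs : Summable fun m : ℕ => (u (m + 1) ^ 2 + v (m + 1) ^ 2) * ((2 : ℝ) ^ (m + 2))⁻¹) :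
    MemLp f 2 Pmeas := by
  rw [memLp_two_iff_integrable_sq hf.aestronglyMeasurable]
  refine ((hf.mul hf).integrable_of_summable ?_).congr (ae_of_all _ fun ω => (sq (f ω)).symm)
  simpa only [Pi.mul_apply, abs_mul_abs_self, abs_mul_self, sq] using hs

end IsConstOnAtoms

lemma summable_succ_pow_mul_inv_two_pow (k : ℕ) :
    Summable fun m : ℕ => ((m : ℝ) + 1) ^ k * ((2 : ℝ) ^ (m + 2))⁻¹ := by
  have h := (summable_nat_add_iff 1).2
    (summable_pow_mul_geometric_of_norm_lt_one k (r := (2 : ℝ)⁻¹) (by norm_num))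
  refine (h.mul_right 2⁻¹).congr fun m => ?_
  push_cast
  rw [← inv_pow, pow_succ, pow_succ]
  ring

lemma integrable_withDensity_ofReal_iff {α : Type*} [MeasurableSpace α] {μ : Measure α}
    {d g : α → ℝ} (hd : Measurable d) :
    Integrable g (μ.withDensity fun x => ENNReal.ofReal (d x)) ↔
      Integrable (fun x => max (d x) 0 * g x) μ := by
  simp only [integrable_withDensity_iff_integrable_smul' hd.ennreal_ofReal
    (ae_of_all _ fun _ => ENNReal.ofReal_lt_top), ENNReal.toReal_ofReal', smul_eq_mul]

lemma integral_withDensity_ofReal {α : Type*} [MeasurableSpace α] {μ : Measure α}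
    {d : α → ℝ} (hd : Measurable d) (g : α → ℝ) :
    ∫ x, g x ∂μ.withDensity (fun x => ENNReal.ofReal (d x)) = ∫ x, max (d x) 0 * g x ∂μ := by
  simp only [integral_withDensity_eq_integral_toReal_smul hd.ennreal_ofReal
    (ae_of_all _ fun _ => ENNReal.ofReal_lt_top), ENNReal.toReal_ofReal', smul_eq_mul]

lemma memLp_two_payoff {X : ℝ → ℝ}
    (hX : IsConstOnAtoms X (fun n => n) (fun n => -((n : ℝ) ^ 2))) : MemLp X 2 Pmeas := by
  refine hX.memLp_two <| ((summable_succ_pow_mul_inv_two_pow 2).add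
    (summable_succ_pow_mul_inv_two_pow 4)).congr fun m => ?_
  push_cast
  ring

theorem integrable_and_integral_eq_zero_of_memLp_density {X d : ℝ → ℝ} {q₁ q₂ : ℕ → ℝ}
    (hX : IsConstOnAtoms X (fun n => n) (fun n => -((n : ℝ) ^ 2)))
    (hd : Measurable d) (hdq : IsConstOnAtoms d q₁ q₂) (hq₁ : ∀ n, 0 ≤ q₁ n)
    (hq₂ : ∀ n, 0 ≤ q₂ n) (hsep : ∀ n : ℕ, 1 ≤ n → q₁ n = n * q₂ n) (hd2 : MemLp d 2 Pmeas) :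
    Integrable X (Pmeas.withDensity fun ω => ENNReal.ofReal (d ω)) ∧
      ∫ ω, X ω ∂Pmeas.withDensity (fun ω => ENNReal.ofReal (d ω)) = 0 := by
  have hdX : Integrable (fun ω => max (d ω) 0 * X ω) Pmeas :=
    hd2.pos_part.integrable_mul (memLp_two_payoff hX)
  have hdX_atoms : IsConstOnAtoms (fun ω => max (d ω) 0 * X ω) (q₁ * fun n : ℕ => (n : ℝ))
      (q₂ * fun n : ℕ => -((n : ℝ) ^ 2)) := (hdq.posPart hq₁ hq₂).mul hX
  refine ⟨(integrable_withDensity_ofReal_iff hd).2 hdX, ?_⟩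
  rw [integral_withDensity_ofReal hd, hdX_atoms.integral_eq_tsum hdX]
  refine (tsum_congr fun m => ?_).trans tsum_zero
  simp only [Pi.mul_apply, hsep (m + 1) (Nat.le_add_left 1 m)]
  ring

theorem not_exists_admissible_superreplication {X : ℝ → ℝ}
    (hX : IsConstOnAtoms X (fun n => n) (fun n => -((n : ℝ) ^ 2))) (x : ℝ) :
    ¬ ∃ α : ℝ → ℝ, IsAdmissible X α ∧ ∀ᵐ ω ∂Pmeas, X ω ≤ x + α ω * X ω := by
  rintro ⟨α, ⟨⟨a, ha⟩, c, hc, hbdd⟩, hsup⟩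
  set N := ⌈x + c⌉₊ + 1
  have hN : 1 ≤ N := Nat.le_add_left 1 _
  have hNxc : x + c < N := by
    have := Nat.le_ceil (x + c)
    simp only [N]; push_cast; linarith
  obtain ⟨ω₁, hω₁, -, h₁⟩ := exists_mem_of_ae_Pmeas (hbdd.and hsup) (measurableSet_J1 N)
    ((J1_subset_Iset hN).trans (Iset_subset_Ioc hN)) (by simp [volume_J1])
  obtain ⟨ω₂, hω₂, h₂, -⟩ := exists_mem_of_ae_Pmeas (hbdd.and hsup) (measurableSet_J2 N)
    ((J2_subset_Iset hN).trans (Iset_subset_Ioc hN)) (by simp [volume_J2 hN])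
  rw [ha N hN ω₁ (J1_subset_Iset hN hω₁), (hX N hN).1 ω₁ hω₁] at h₁
  rw [ha N hN ω₂ (J2_subset_Iset hN hω₂), (hX N hN).2 ω₂ hω₂] at h₂
  have hN1 : (1 : ℝ) ≤ N := by exact_mod_cast hN
  nlinarith

/-- Example 9 of Biagini–Frittelli: (i) every separating measure `Q` (probability `Q ≪ P`
with density constantly `q₁ n` on `J_n^1`, `q₂ n` on `J_n^2`, `q₁ n = n·q₂ n`) whose
density is square-integrable w.r.t. `P` (finite generalized entropy for `Φ(y) = y²`)
satisfies `X₁ ∈ L¹(Q)` and `E_Q[X₁] = 0`; (ii) no admissible strategy super-replicates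
`X₁` from any initial capital `x`, i.e. the super replication price of `X₁` is `+∞`. -/
theorem example9_claim_X1
    (X₁ : ℝ → ℝ)
    (hX₁ : ∀ n : ℕ, 1 ≤ n →
      (∀ ω ∈ J1 n, X₁ ω = (n : ℝ)) ∧ (∀ ω ∈ J2 n, X₁ ω = -((n : ℝ) ^ 2))) :
    (∀ (q₁ q₂ : ℕ → ℝ) (d : ℝ → ℝ) (Q : Measure ℝ),
      (∀ n, 0 ≤ q₁ n) → (∀ n, 0 ≤ q₂ n) → Measurable d →
      (∀ n : ℕ, 1 ≤ n → (∀ ω ∈ J1 n, d ω = q₁ n) ∧ (∀ ω ∈ J2 n, d ω = q₂ n)) →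
      Q = Pmeas.withDensity (fun ω => ENNReal.ofReal (d ω)) →
      IsProbabilityMeasure Q →
      (∀ n : ℕ, 1 ≤ n → q₁ n = (n : ℝ) * q₂ n) →
      Integrable (fun ω => d ω ^ 2) Pmeas →
      Integrable X₁ Q ∧ ∫ ω, X₁ ω ∂Q = 0) ∧
    ∀ x : ℝ, ¬ ∃ α : ℝ → ℝ, IsAdmissible X₁ α ∧ ∀ᵐ ω ∂Pmeas, X₁ ω ≤ x + α ω * X₁ ω := by
  refine ⟨fun q₁ q₂ d Q hq₁ hq₂ hd hdq hQ _ hsep hL2 => ?_,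
    not_exists_admissible_superreplication hX₁⟩
  subst hQ
  exact integrable_and_integral_eq_zero_of_memLp_density hX₁ hd hdq hq₁ hq₂ hsep
    ((memLp_two_iff_integrable_sq hd.aestronglyMeasurable).2 hL2)
end

section
/- For every real a > 0, setting b = (log 2)/a, the integral ∫₀^∞ e^t · (b/√(2πt³)) · exp(−(b + (a/2)t)²/(2t)) dt is finite if and only if a² ≥ 8. -/
/-!
Completing the square, `t - (b + a t / 2)² / (2t) = -ab/2 + (1 - a²/8) t - b² / (2t)`, so the
integrand is a positive constant times `t^(-3/2) · exp((1 - a²/8) t - b² / (2t))`. Near `0` the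
factor `exp(-b² / (2t))` kills the singularity; at infinity the integrand decays like `t^(-3/2)`
when `1 - a²/8 ≤ 0` and grows exponentially otherwise.
-/

open MeasureTheory Real Set
open scoped ENNReal

lemma lintegral_ofReal_const_mul_lt_top_iff {α : Type*} [MeasurableSpace α] {μ : Measure α}
    {K : ℝ} (hK : 0 < K) (f : α → ℝ) :
    ∫⁻ x, ENNReal.ofReal (K * f x) ∂μ < ⊤ ↔ ∫⁻ x, ENNReal.ofReal (f x) ∂μ < ⊤ := by
  simp_rw [ENNReal.ofReal_mul hK.le]
  rw [lintegral_const_mul' _ _ ENNReal.ofReal_ne_top]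
  simp only [ENNReal.mul_lt_top_iff, ENNReal.ofReal_lt_top, true_and, ENNReal.ofReal_eq_zero,
    hK.not_ge, false_or, or_iff_left_iff_imp]
  intro h
  simp [h]

lemma sq_div_two_le_exp {x : ℝ} (hx : 0 ≤ x) : x ^ 2 / 2 ≤ exp x := by
  simpa using pow_div_factorial_le_exp x hx 2

lemma rpow_neg_three_halves_mul_sq {t : ℝ} (ht : 0 < t) :
    t ^ (-(3 / 2 : ℝ)) * t ^ 2 = √t := by
  rw [sqrt_eq_rpow, ← rpow_natCast, ← rpow_add ht]
  norm_num

lemma rpow_neg_three_halves_mul_exp_le {c β t : ℝ} (hc : c ≤ 0) (hβ : 0 < β) (ht : 0 < t)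
    (ht1 : t ≤ 1) : t ^ (-(3 / 2 : ℝ)) * exp (c * t - β / t) ≤ 2 / β ^ 2 := by
  have hexp : exp (c * t - β / t) ≤ 2 * t ^ 2 / β ^ 2 :=
    calc exp (c * t - β / t) ≤ exp (-(β / t)) := by
          gcongr; nlinarith
      _ = (exp (β / t))⁻¹ := exp_neg _
      _ ≤ ((β / t) ^ 2 / 2)⁻¹ := by gcongr; exact sq_div_two_le_exp (by positivity)
      _ = 2 * t ^ 2 / β ^ 2 := by field_simp
  calc t ^ (-(3 / 2 : ℝ)) * exp (c * t - β / t) ≤ t ^ (-(3 / 2 : ℝ)) * (2 * t ^ 2 / β ^ 2) := by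
        gcongr
    _ = 2 / β ^ 2 * √t := by rw [← rpow_neg_three_halves_mul_sq ht]; ring
    _ ≤ 2 / β ^ 2 := by
        have : √t ≤ 1 := sqrt_le_one.mpr ht1
        have : 0 ≤ 2 / β ^ 2 := by positivity
        nlinarith

lemma le_rpow_neg_three_halves_mul_exp {c β t : ℝ} (hc : 0 < c) (hβ : 0 ≤ β) (ht : 1 ≤ t) :
    c ^ 2 / 2 * exp (-β) ≤ t ^ (-(3 / 2 : ℝ)) * exp (c * t - β / t) := by
  have ht0 : 0 < t := by linarith
  calc c ^ 2 / 2 * exp (-β) ≤ c ^ 2 / 2 * exp (-β) * √t := by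
        have : 1 ≤ √t := one_le_sqrt.mpr ht
        have : 0 ≤ c ^ 2 / 2 * exp (-β) := by positivity
        nlinarith
    _ = t ^ (-(3 / 2 : ℝ)) * ((c * t) ^ 2 / 2 * exp (-β)) := by
        rw [← rpow_neg_three_halves_mul_sq ht0]; ring
    _ ≤ t ^ (-(3 / 2 : ℝ)) * (exp (c * t) * exp (-(β / t))) := by
        gcongr
        · exact sq_div_two_le_exp (by positivity)
        · exact div_le_self hβ ht
    _ = t ^ (-(3 / 2 : ℝ)) * exp (c * t - β / t) := by rw [← exp_add, sub_eq_add_neg]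

lemma rpow_neg_three_halves_mul_exp_le_rpow {c β t : ℝ} (hc : c ≤ 0) (hβ : 0 ≤ β) (ht : 0 < t) :
    t ^ (-(3 / 2 : ℝ)) * exp (c * t - β / t) ≤ t ^ (-(3 / 2 : ℝ)) := by
  have : c * t - β / t ≤ 0 := by
    have : 0 ≤ β / t := by positivity
    nlinarith
  calc t ^ (-(3 / 2 : ℝ)) * exp (c * t - β / t) ≤ t ^ (-(3 / 2 : ℝ)) * 1 := by
        gcongr; exact exp_le_one_iff.mpr this
    _ = t ^ (-(3 / 2 : ℝ)) := mul_one _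

lemma lintegral_rpow_neg_three_halves_mul_exp_lt_top_iff {c β : ℝ} (hβ : 0 < β) :
    ∫⁻ t in Ioi 0, ENNReal.ofReal (t ^ (-(3 / 2 : ℝ)) * exp (c * t - β / t)) < ⊤ ↔ c ≤ 0 := by
  set f := fun t : ℝ ↦ ENNReal.ofReal (t ^ (-(3 / 2 : ℝ)) * exp (c * t - β / t))
  constructor
  · intro hfin
    by_contra! hc
    have hlow : ∀ t ∈ Ioi (1 : ℝ), ENNReal.ofReal (c ^ 2 / 2 * exp (-β)) ≤ f t := fun t ht ↦
      ENNReal.ofReal_le_ofReal (le_rpow_neg_three_halves_mul_exp hc hβ.le (le_of_lt ht))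
    have : ∫⁻ t in Ioi 0, f t = ⊤ := by
      refine top_unique ?_
      calc ⊤ = ∫⁻ _ in Ioi (1 : ℝ), ENNReal.ofReal (c ^ 2 / 2 * exp (-β)) := by
            rw [setLIntegral_const, volume_Ioi, ENNReal.mul_top]
            positivity
        _ ≤ ∫⁻ t in Ioi 1, f t := setLIntegral_mono' measurableSet_Ioi hlow
        _ ≤ ∫⁻ t in Ioi 0, f t := lintegral_mono_set (Ioi_subset_Ioi zero_le_one)
    exact hfin.ne this
  · intro hc
    rw [← Ioc_union_Ioi_eq_Ioi zero_le_one,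
      lintegral_union measurableSet_Ioi (Ioc_disjoint_Ioi le_rfl), ENNReal.add_lt_top]
    constructor
    · calc ∫⁻ t in Ioc 0 1, f t ≤ ∫⁻ _ in Ioc (0 : ℝ) 1, ENNReal.ofReal (2 / β ^ 2) :=
            setLIntegral_mono' measurableSet_Ioc fun t ht ↦
              ENNReal.ofReal_le_ofReal (rpow_neg_three_halves_mul_exp_le hc hβ ht.1 ht.2)
        _ < ⊤ := by simp
    · calc ∫⁻ t in Ioi 1, f t ≤ ∫⁻ t in Ioi (1 : ℝ), ENNReal.ofReal (t ^ (-(3 / 2 : ℝ))) :=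
            setLIntegral_mono' measurableSet_Ioi fun t ht ↦ ENNReal.ofReal_le_ofReal
              (rpow_neg_three_halves_mul_exp_le_rpow hc hβ.le (zero_lt_one.trans ht))
        _ < ⊤ := (integrableOn_Ioi_rpow_of_lt (by norm_num) one_pos).lintegral_lt_top

lemma passage_exponent_eq (a b : ℝ) {t : ℝ} (ht : t ≠ 0) :
    t - (b + a / 2 * t) ^ 2 / (2 * t) = -(a * b / 2) + ((1 - a ^ 2 / 8) * t - b ^ 2 / 2 / t) := by
  field_simp
  ring

lemma passage_integrand_eq (a b : ℝ) {t : ℝ} (ht : 0 < t) :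
    exp t * (b / √(2 * π * t ^ 3)) * exp (-((b + a / 2 * t) ^ 2 / (2 * t))) =
      b * exp (-(a * b / 2)) / √(2 * π) *
        (t ^ (-(3 / 2 : ℝ)) * exp ((1 - a ^ 2 / 8) * t - b ^ 2 / 2 / t)) := by
  have hsqrt : √(2 * π * t ^ 3) = √(2 * π) * t ^ (3 / 2 : ℝ) := by
    rw [sqrt_mul (by positivity), sqrt_eq_rpow (t ^ 3), ← rpow_natCast, ← rpow_mul ht.le]
    norm_num
  rw [hsqrt, rpow_neg ht.le, mul_right_comm, ← exp_add, ← sub_eq_add_neg,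
    passage_exponent_eq a b ht.ne', exp_add]
  field_simp

/-- The analytic core of Lemma 27(d) of Biagini–Frittelli: for `a > 0` and
`b = (log 2)/a`, the integral
`∫₀^∞ eᵗ · (b/√(2πt³)) · exp(−(b + (a/2)t)²/(2t)) dt`
(of `eᵗ` against the density of the passage time of a Brownian motion with drift `−a/2`
to the level `b`) is finite iff `a² ≥ 8`. -/
theorem exp_integral_passage_time_finite_iff
    (a : ℝ) (ha : 0 < a) (b : ℝ) (hb : b = Real.log 2 / a) :
    (∫⁻ t in Set.Ioi (0 : ℝ),
        ENNReal.ofReal (Real.exp t * (b / Real.sqrt (2 * Real.pi * t ^ 3)) *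
          Real.exp (-((b + (a / 2) * t) ^ 2 / (2 * t))))) < ⊤ ↔
      8 ≤ a ^ 2 := by
  have hb0 : 0 < b := hb ▸ div_pos (log_pos one_lt_two) ha
  have hK : 0 < b * exp (-(a * b / 2)) / √(2 * π) := by positivity
  rw [setLIntegral_congr_fun measurableSet_Ioi fun t ht ↦
      congrArg ENNReal.ofReal (passage_integrand_eq a b ht),
    lintegral_ofReal_const_mul_lt_top_iff hK,
    lintegral_rpow_neg_three_halves_mul_exp_lt_top_iff (by positivity)]
  constructor <;> intro h <;> linarith
end
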